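/- arXiv:2310.20259 — 3 statements merged into one kernel-verified Lean document; each statement's English description precedes it below -/
import Mathlib

section
/- Let {D_*} be a graded subgroup of a chain complex {C_*, ∂_*} of k-vector spaces, with supremum complex S_* (S_p = D_p + ∂D_{p+1}) and infimum complex I_* (I_p = D_p ∩ ∂^{-1}D_{p-1}). Then the inclusion I_* ↪ S_* is a chain map inducing isomorphisms H_p(I_*) → H_p(S_*) for all p. -/
/-!
In degree `p + 1` write `Z` for the cycles of `I` and `B = ∂ D_{p+2}`. Since `∂∂ = 0`, the
boundaries of `S` are exactly `B`, the cycles of `S` are `Z + B`, and the boundaries of `I` are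
`Z ∩ B`. The map `H(I) → H(S)` is therefore the second isomorphism `Z/(Z ∩ B) ≃ (Z + B)/B`.
-/

open Submodule

section

variable {k : Type*} [Field k] (C : ℤ → Type*)
  [∀ p, AddCommGroup (C p)] [∀ p, Module k (C p)]
  (d : ∀ p : ℤ, C (p + 1) →ₗ[k] C p)

/-- Homology in degree `p+1` of a graded family of subspaces `A`
(`A p ≤ C (p+1)`), namely `(A p ∩ ker ∂) / ∂(A (p+1))`. -/
abbrev Hml (A : ∀ p : ℤ, Submodule k (C (p + 1))) (p : ℤ) :=
  ↥(A p ⊓ LinearMap.ker (d p)) ⧸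
    Submodule.comap (A p ⊓ LinearMap.ker (d p)).subtype
      (Submodule.map (d (p + 1)) (A (p + 1)))

end

namespace Submodule

section SecondIsomorphism

variable {R M : Type*} [Ring R] [AddCommGroup M] [Module R M]

theorem exists_quotEquiv_of_inf_eq_of_sup_eq (Z B N Z' : Submodule R M)
    (hN : Z ⊓ B = N) (hZ' : Z ⊔ B = Z') :
    ∃ e : (Z ⧸ comap Z.subtype N) ≃ₗ[R] (Z' ⧸ comap Z'.subtype B),
      ∀ (x : M) (hx : x ∈ Z) (hx' : x ∈ Z'),
        e (Quotient.mk ⟨x, hx⟩) = Quotient.mk ⟨x, hx'⟩ := by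
  subst hN hZ'
  exact ⟨(quotEquivOfEq _ _ (comap_inf _ _ _)).trans (LinearMap.quotientInfEquivSupQuotient Z B),
    fun _ _ _ => rfl⟩

end SecondIsomorphism

section CompEqZero

variable {R L M N : Type*} [Ring R] [AddCommGroup L] [AddCommGroup M] [AddCommGroup N]
  [Module R L] [Module R M] [Module R N] {f : M →ₗ[R] N} {g : L →ₗ[R] M}

theorem inf_comap_inf_ker (A : Submodule R M) (F : Submodule R N) :
    A ⊓ comap f F ⊓ LinearMap.ker f = A ⊓ LinearMap.ker f := by
  have hker : LinearMap.ker f ≤ comap f F := fun x hx => by simp [LinearMap.mem_ker.mp hx]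
  rw [inf_assoc, inf_eq_right.mpr hker]

theorem map_le_ker_of_comp_eq_zero (hfg : f ∘ₗ g = 0) (E : Submodule R L) :
    map g E ≤ LinearMap.ker f := by
  rintro _ ⟨x, -, rfl⟩
  exact LinearMap.congr_fun hfg x

theorem map_sup_map_of_comp_eq_zero (hfg : f ∘ₗ g = 0) (A : Submodule R M) (E : Submodule R L) :
    map f (A ⊔ map g E) = map f A := by
  rw [map_sup, ← map_comp, hfg, Submodule.map_zero, sup_bot_eq]

theorem sup_map_inf_ker_of_comp_eq_zero (hfg : f ∘ₗ g = 0) (A : Submodule R M)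
    (E : Submodule R L) :
    (A ⊔ map g E) ⊓ LinearMap.ker f = A ⊓ LinearMap.ker f ⊔ map g E := by
  rw [sup_comm, sup_inf_assoc_of_le _ (map_le_ker_of_comp_eq_zero hfg E), sup_comm]

theorem inf_ker_inf_map_of_comp_eq_zero (hfg : f ∘ₗ g = 0) (A : Submodule R M)
    (E : Submodule R L) :
    A ⊓ LinearMap.ker f ⊓ map g E = map g (E ⊓ comap g A) := by
  rw [inf_assoc, inf_eq_right.mpr (map_le_ker_of_comp_eq_zero hfg E), inf_comm,
    map_inf_eq_map_inf_comap]

end CompEqZero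

end Submodule

/-- For a graded subgroup `D` of a chain complex `{C_*, ∂_*}` with supremum
complex `S p = D p + ∂ D (p+1)` and infimum complex `I p = D p ∩ ∂⁻¹ D (p-1)`,
the inclusion `I ↪ S` induces an isomorphism on homology in every degree: there
is a linear equivalence sending the class of a cycle of `I` to the class of the
same cycle viewed in `S`. -/
theorem inf_to_sup_homology_iso
    {k : Type*} [Field k] (C : ℤ → Type*)
    [∀ p, AddCommGroup (C p)] [∀ p, Module k (C p)]
    (d : ∀ p : ℤ, C (p + 1) →ₗ[k] C p)
    (hd : ∀ (p : ℤ) (x : C (p + 1 + 1)), d p (d (p + 1) x) = 0)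
    (D : ∀ p : ℤ, Submodule k (C p)) :
    ∀ p : ℤ,
      ∃ e : Hml C d (fun q => (D (q + 1)) ⊓ Submodule.comap (d q) (D q)) p ≃ₗ[k]
            Hml C d (fun q => (D (q + 1)) ⊔ Submodule.map (d (q + 1)) (D (q + 1 + 1))) p,
        ∀ (x : C (p + 1))
          (hx : x ∈ ((D (p + 1)) ⊓ Submodule.comap (d p) (D p)) ⊓ LinearMap.ker (d p))
          (hx' : x ∈ ((D (p + 1)) ⊔ Submodule.map (d (p + 1)) (D (p + 1 + 1))) ⊓
              LinearMap.ker (d p)),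
          e (Submodule.Quotient.mk ⟨x, hx⟩) = Submodule.Quotient.mk ⟨x, hx'⟩ := by
  intro p
  have hdd : ∀ q, d q ∘ₗ d (q + 1) = 0 := fun q => LinearMap.ext (hd q)
  have boundaries_sup : map (d (p + 1)) (D (p + 1 + 1) ⊔ map (d (p + 1 + 1)) (D (p + 1 + 1 + 1)))
      = map (d (p + 1)) (D (p + 1 + 1)) :=
    map_sup_map_of_comp_eq_zero (hdd (p + 1)) _ _
  have boundaries_inf : D (p + 1) ⊓ comap (d p) (D p) ⊓ LinearMap.ker (d p) ⊓
      map (d (p + 1)) (D (p + 1 + 1)) =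
      map (d (p + 1)) (D (p + 1 + 1) ⊓ comap (d (p + 1)) (D (p + 1))) := by
    rw [inf_comap_inf_ker, inf_ker_inf_map_of_comp_eq_zero (hdd p)]
  have cycles_sup : D (p + 1) ⊓ comap (d p) (D p) ⊓ LinearMap.ker (d p) ⊔
      map (d (p + 1)) (D (p + 1 + 1)) =
      (D (p + 1) ⊔ map (d (p + 1)) (D (p + 1 + 1))) ⊓ LinearMap.ker (d p) := by
    rw [inf_comap_inf_ker, sup_map_inf_ker_of_comp_eq_zero (hdd p)]
  unfold Hml
  rw [boundaries_sup]
  exact exists_quotEquiv_of_inf_eq_of_sup_eq _ _ _ _ boundaries_inf cycles_sup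
end

section
/- Suppose in the matrix reduction of the boundary matrices A_p (arising from a compatible basis of a filtration of graded subgroups), the pair (e^i_p, e^j_{p+1}) is produced by a pivot: i.e., the reduced matrix Ã_{p+1} has the pivot of column j at row i. Then column i of the reduced matrix Ã_p is zero. Consequently each basis element appears in at most one pair. -/
/-! Applying `∂ ∘ ∂ = 0` to `ẽ^j_{p+1}` gives a relation among the columns `∂ e^l_p`, `l ≤ i`, in
which `∂ e^i_p` has a nonzero coefficient, so `∂ e^i_p` lies in the span of the earlier columns.
Left-to-right column additions are an upper unitriangular change of columns, which preserves the
span of every initial segment of columns; hence the reduced column `i` lies in the span of the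
reduced columns `l < i`. A nonzero vector in the span of a reduced family has the same pivot as one
of its columns, so a nonzero column `i` would share its pivot with an earlier one. -/

/-- `LowAt w i`: the lowest nonzero entry of the column `w` is at row `i`. -/
def LowAt {M : ℕ} {k : Type*} [Field k] (w : Fin M → k) (i : Fin M) : Prop :=
  w i ≠ 0 ∧ ∀ l : Fin M, i < l → w l = 0

/-- `LowAtE v i`: the column `v` (rows indexed by the compatible-basis rows
`Fin m` followed by the auxiliary rows `Fin n`) has its lowest nonzero entry at
the compatible-basis row `i`; in particular all auxiliary entries vanish. -/
def LowAtE {m n : ℕ} {k : Type*} [Field k] (v : Fin m ⊕ Fin n → k) (i : Fin m) : Prop :=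
  v (Sum.inl i) ≠ 0 ∧ (∀ l : Fin m, i < l → v (Sum.inl l) = 0) ∧
    ∀ r : Fin n, v (Sum.inr r) = 0

/-- A family of columns is *reduced* if distinct (nonzero) columns have distinct
pivots (lowest nonzero rows). -/
def ReducedCols {m M : ℕ} {k : Type*} [Field k] (cols : Fin m → Fin M → k) : Prop :=
  ∀ (j j' : Fin m) (i : Fin M), LowAt (cols j) i → LowAt (cols j') i → j = j'

open Submodule Set

section Unitriangular

variable {R M ι : Type*} [Ring R] [AddCommGroup M] [Module R M] [Fintype ι] [LinearOrder ι]
  {U : Matrix ι ι R}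

lemma Matrix.BlockTriangular.sum_smul_mem_span_Iic (hU : U.BlockTriangular id) (w : ι → M)
    (j : ι) :    ∑ l, U l j • w l ∈ span R (w '' Iic j) := by
  refine sum_mem fun l _ => ?_
  rcases le_or_gt l j with h | h
  · exact smul_mem _ _ (subset_span ⟨l, h, rfl⟩)
  · simp [hU h]

lemma Matrix.BlockTriangular.mem_span_Iic_sum_smul (hU : U.BlockTriangular id)
    (hdiag : ∀ a, U a a = 1) (w : ι → M) (j : ι) :
    w j ∈ span R ((fun j' => ∑ l, U l j' • w l) '' Iic j) := by
  induction j using WellFoundedLT.induction with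
  | ind j ih =>
  have hsplit : w j + ∑ l ∈ Finset.univ.erase j, U l j • w l = ∑ l, U l j • w l := by
    rw [← Finset.add_sum_erase _ _ (Finset.mem_univ j), hdiag, one_smul]
  rw [eq_sub_of_add_eq hsplit]
  refine sub_mem (subset_span ⟨j, le_rfl, rfl⟩) (sum_mem fun l hl => ?_)
  rcases lt_or_gt_of_ne (Finset.ne_of_mem_erase hl) with hlj | hjl
  · exact smul_mem _ _ (span_mono (image_mono (Iic_subset_Iic.2 hlj.le)) (ih l hlj))
  · simp [hU hjl]

lemma Matrix.BlockTriangular.sum_smul_mem_span_Iio (hU : U.BlockTriangular id)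
    (hdiag : ∀ a, U a a = 1) (w : ι → M) {i : ι} (hi : w i ∈ span R (w '' Iio i)) :
    ∑ l, U l i • w l ∈ span R ((fun j => ∑ l, U l j • w l) '' Iio i) := by
  have hIio : span R (w '' Iio i) ≤ span R ((fun j => ∑ l, U l j • w l) '' Iio i) :=
    span_le.2 <| by
      rintro _ ⟨l, hl, rfl⟩
      exact span_mono (image_mono (Iic_subset_Iio.2 hl))
        (hU.mem_span_Iic_sum_smul hdiag w l)
  refine hIio ?_
  rw [← span_insert_eq_span hi, ← image_insert_eq, Iio_insert]
  exact hU.sum_smul_mem_span_Iic w i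

end Unitriangular

section Pivots

variable {k : Type*} [Field k] {M : ℕ}

lemma LowAt.smul {w : Fin M → k} {i : Fin M} (h : LowAt w i) {c : k} (hc : c ≠ 0) :
    LowAt (c • w) i :=
  ⟨by simpa using mul_ne_zero hc h.1, fun l hl => by simp [h.2 l hl]⟩

lemma LowAt.sum {ι : Type*} {s : Finset ι} {f : ι → Fin M → k} {x₀ : ι} {p : Fin M}
    (h₀ : LowAt (f x₀) p) (hx₀ : x₀ ∈ s) (hrest : ∀ x ∈ s, x ≠ x₀ → ∀ l, p ≤ l → f x l = 0) :
    LowAt (∑ x ∈ s, f x) p := by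
  refine ⟨?_, fun l hl => ?_⟩
  · rw [Finset.sum_apply,
      Finset.sum_eq_single_of_mem x₀ hx₀ fun x hx hne => hrest x hx hne p le_rfl]
    exact h₀.1
  · rw [Finset.sum_apply]
    refine Finset.sum_eq_zero fun x hx => ?_
    by_cases hx' : x = x₀
    · exact hx' ▸ h₀.2 l hl
    · exact hrest x hx hx' l hl.le

lemma exists_lowAt_of_ne_zero {w : Fin M → k} (hw : w ≠ 0) : ∃ i, LowAt w i := by
  classical
  have hne : (Finset.univ.filter fun l => w l ≠ 0).Nonempty := by
    obtain ⟨l, hl⟩ := Function.ne_iff.1 hw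
    exact ⟨l, by simpa using hl⟩
  refine ⟨_, by simpa using Finset.max'_mem _ hne, fun l hl => ?_⟩
  by_contra hl0
  exact (Finset.le_max' _ l (by simpa using hl0)).not_gt hl

variable {m : ℕ} {cols : Fin m → Fin M → k}

lemma ReducedCols.exists_lowAt_sum (hred : ReducedCols cols) (s : Finset (Fin m))
    (c : Fin m → k) (hv : ∑ x ∈ s, c x • cols x ≠ 0) :
    ∃ x ∈ s, ∃ i₀, LowAt (∑ x ∈ s, c x • cols x) i₀ ∧ LowAt (cols x) i₀ := by
  classical
  set s' := s.filter fun x => c x • cols x ≠ 0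
  have hs' : s'.Nonempty := by
    obtain ⟨x, hx, hx0⟩ := Finset.exists_ne_zero_of_sum_ne_zero hv
    exact ⟨x, Finset.mem_filter.2 ⟨hx, hx0⟩⟩
  have hterm : ∀ x ∈ s', c x ≠ 0 ∧ cols x ≠ 0 := fun x hx =>
    smul_ne_zero_iff.1 (Finset.mem_filter.1 hx).2
  have : Nonempty (Fin M) :=
    ⟨(exists_lowAt_of_ne_zero (hterm _ hs'.choose_spec).2).choose⟩
  choose! p hp using fun x (hx : x ∈ s') => exists_lowAt_of_ne_zero (hterm x hx).2
  obtain ⟨x₀, hx₀, hmax⟩ := s'.exists_max_image p hs'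
  refine ⟨x₀, Finset.mem_of_mem_filter _ hx₀, p x₀, ?_, hp x₀ hx₀⟩
  refine LowAt.sum (f := fun x => c x • cols x) ((hp x₀ hx₀).smul (hterm x₀ hx₀).1)
    (Finset.mem_of_mem_filter _ hx₀) fun x hx hne l hl => ?_
  by_cases hx' : x ∈ s'
  · have hlt : p x < p x₀ := (hmax x hx').lt_of_ne fun h =>
      hne (hred x x₀ _ (h ▸ hp x hx') (hp x₀ hx₀))
    simp [(hp x hx').2 l (hlt.trans_le hl)]
  · have hzero : c x • cols x = 0 := not_not.1 fun h => hx' (Finset.mem_filter.2 ⟨hx, h⟩)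
    simpa using congrFun hzero l

lemma ReducedCols.eq_zero_of_mem_span (hred : ReducedCols cols) {s : Set (Fin m)} {i : Fin m}
    (hi : i ∉ s) (h : cols i ∈ span k (cols '' s)) : cols i = 0 := by
  by_contra hne
  obtain ⟨l, hls, hl⟩ := (Finsupp.mem_span_image_iff_linearCombination k).1 h
  have hsum : ∑ x ∈ l.support, l x • cols x = cols i := by
    rw [← hl, Finsupp.linearCombination_apply, Finsupp.sum]
  obtain ⟨x, hx, i₀, hlow, hxlow⟩ := hred.exists_lowAt_sum l.support l (hsum ▸ hne)
  rw [hsum] at hlow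
  exact hi (hred i x i₀ hlow hxlow ▸ (Finsupp.mem_supported k l).1 hls hx)

end Pivots

section Boundary

variable {k V : Type*} [Field k] [AddCommGroup V] [Module k V] {m n : ℕ}

lemma LowAtE.basis_mem_span_insert (b : Module.Basis (Fin m ⊕ Fin n) k V) {x : V} {i : Fin m}
    (hx : LowAtE (fun r => b.repr x r) i) :
    b (Sum.inl i) ∈ span k (insert x ((b ∘ Sum.inl) '' Iio i)) := by
  set c := b.repr x (Sum.inl i)
  have hc : c ≠ 0 := hx.1
  have hrest : x - c • b (Sum.inl i) ∈ span k ((b ∘ Sum.inl) '' Iio i) := by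
    rw [image_comp, b.mem_span_image]
    intro r hr
    rw [Finset.mem_coe, Finsupp.mem_support_iff] at hr
    rcases r with l | r
    · rcases lt_trichotomy l i with hl | rfl | hl
      · exact ⟨l, hl, rfl⟩
      · simp [c] at hr
      · simp [hl.ne', hx.2.1 l hl] at hr
    · simp [hx.2.2 r] at hr
  rw [mem_span_insert]
  refine ⟨c⁻¹, -c⁻¹ • (x - c • b (Sum.inl i)), smul_mem _ _ hrest, ?_⟩
  simp [smul_sub, smul_smul, inv_mul_cancel₀ hc]

lemma LowAtE.apply_basis_mem_span {W : Type*} [AddCommGroup W] [Module k W]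
    (b : Module.Basis (Fin m ⊕ Fin n) k V) (f : V →ₗ[k] W) {x : V} (hfx : f x = 0) {i : Fin m}
    (hx : LowAtE (fun r => b.repr x r) i) :
    f (b (Sum.inl i)) ∈ span k ((fun l => f (b (Sum.inl l))) '' Iio i) := by
  have := apply_mem_span_image_of_mem_span f (hx.basis_mem_span_insert b)
  rwa [image_insert_eq, hfx, span_insert_zero, ← image_comp] at this

end Boundary

/-- Suppose `∂∘∂ = 0`, `b1` is a basis of `C_p` whose `Sum.inl` part is the
compatible basis `e_p` (ordered first) and whose `Sum.inr` part consists of the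
auxiliary elements `ε_p`, and suppose the (already reduced) column of
`∂ ẽ^j_{p+1}` has its pivot at the row of `e^i_p` (i.e. `(e^i_p, e^j_{p+1})` is
a *pair*).  Then in any reduction of the degree-`p` boundary matrix — i.e. for
any left-to-right addition `U` of the family `e_p` making the columns of
`∂_p` (w.r.t. any ordered basis `b0` of `C_{p-1}`) reduced — the `i`-th column
is zero; in particular the `i`-th column has no pivot, so `e^i_p` does not also
occur as the lower element of a pair.  Moreover, if the degree-`p+1` columns are
reduced, then `e^i_p` is paired with no column other than `j`. -/
theorem pair_clears_column
    {k : Type*} [Field k]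
    {V2 V1 V0 : Type*}
    [AddCommGroup V2] [Module k V2] [AddCommGroup V1] [Module k V1]
    [AddCommGroup V0] [Module k V0]
    (d2 : V2 →ₗ[k] V1) (d1 : V1 →ₗ[k] V0)
    (hdd : ∀ x : V2, d1 (d2 x) = 0)
    {m1 n1 m2 : ℕ}
    (b1 : Module.Basis (Fin m1 ⊕ Fin n1) k V1)
    (e2t : Fin m2 → V2)
    (j : Fin m2) (i : Fin m1)
    (hpair : LowAtE (fun r => b1.repr (d2 (e2t j)) r) i) :
    (∀ (U : Matrix (Fin m1) (Fin m1) k),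
      (∀ a b : Fin m1, b < a → U a b = 0) → (∀ a : Fin m1, U a a = 1) →
      ∀ {M0 : ℕ} (b0 : Module.Basis (Fin M0) k V0),
        ReducedCols (fun j' i0 =>
          b0.repr (d1 (∑ l : Fin m1, U l j' • b1 (Sum.inl l))) i0) →
        (d1 (∑ l : Fin m1, U l i • b1 (Sum.inl l)) = 0 ∧
          ∀ i0 : Fin M0, ¬ LowAt (fun r =>
            b0.repr (d1 (∑ l : Fin m1, U l i • b1 (Sum.inl l))) r) i0)) ∧
    ((∀ (j₁ j₂ : Fin m2) (i' : Fin m1),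
        LowAtE (fun r => b1.repr (d2 (e2t j₁)) r) i' →
        LowAtE (fun r => b1.repr (d2 (e2t j₂)) r) i' → j₁ = j₂) →
      ∀ j' : Fin m2, LowAtE (fun r => b1.repr (d2 (e2t j')) r) i → j' = j) := by
  refine ⟨fun U hU hdiag M0 b0 hred => ?_, fun hunique j' hj' => hunique j' j i hj' hpair⟩
  set w : Fin m1 → V0 := fun l => d1 (b1 (Sum.inl l))
  set t : Fin m1 → V0 := fun j' => ∑ l, U l j' • w l
  have ht : ∀ j', d1 (∑ l, U l j' • b1 (Sum.inl l)) = t j' := fun j' => by simp [t, w]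
  have hti : t i ∈ span k (t '' Iio i) :=
    Matrix.BlockTriangular.sum_smul_mem_span_Iio (fun a b h => hU a b h) hdiag w
      (hpair.apply_basis_mem_span b1 d1 (hdd _))
  have hred' : ReducedCols fun j' => b0.equivFun (t j') := by simpa [ht] using hred
  have hzero : t i = 0 := by
    refine b0.equivFun.map_eq_zero_iff.1 (hred'.eq_zero_of_mem_span self_notMem_Iio ?_)
    simpa only [image_image, LinearEquiv.coe_coe] using
      apply_mem_span_image_of_mem_span b0.equivFun.toLinearMap hti
  rw [ht]
  exact ⟨hzero, fun i₀ hi₀ => hi₀.1 (by simp [hzero])⟩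
end

section
/- Two extended persistence modules V, W : E → Vect are ε-interleaved (in the sense of the quadruple of maps φ_a : V_a → W_{a+ε}, φ_b̄ : V_b̄ → W_{(b−ε)‾}, ψ_a : W_a → V_{a+ε}, ψ_b̄ : W_b̄ → V_{(b−ε)‾} satisfying the naturality and triangle conditions) if and only if there exists a functor L : E × {0, ε} → Vect extending V on E × {0} and W on E × {ε}, where E × {0, ε} is given the partial order: (x,a) ≤ (y,b) iff either (x,y ≠ ∞ and Ω_{|a−b|}(x) ≤ y), or (x ∈ ℝ and y = ∞), or (x = ∞ and y ∈ ℝ^o). -/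
/-- The extended parameter poset `E = ℝ ∪ {∞} ∪ ℝᵒ`. -/
inductive EPt : Type where
  | real : ℝ → EPt
  | infty : EPt
  | coreal : ℝ → EPt

namespace EPt

/-- The order on `E`. -/
def le : EPt → EPt → Prop
  | real a, real b => a ≤ b
  | real _, infty => True
  | real _, coreal _ => True
  | infty, infty => True
  | infty, coreal _ => True
  | coreal a, coreal b => b ≤ a
  | _, _ => False

instance : PartialOrder EPt where
  le := le
  le_refl x := by cases x <;> simp [le]
  le_trans x y z hxy hyz := by
    cases x <;> cases y <;> cases z <;> simp_all [le] <;> linarith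
  le_antisymm x y hxy hyx := by
    cases x <;> cases y <;> simp_all [le] <;> linarith

end EPt

/-- An extended persistence module. -/
structure PersMod (k : Type) [Field k] where
  V : EPt → Type
  [acg : ∀ x, AddCommGroup (V x)]
  [mod : ∀ x, Module k (V x)]
  map : ∀ {x y : EPt}, x ≤ y → (V x →ₗ[k] V y)
  map_id : ∀ (x : EPt) (h : x ≤ x), map h = LinearMap.id
  map_comp : ∀ {x y z : EPt} (h1 : x ≤ y) (h2 : y ≤ z),
    map (le_trans h1 h2) = (map h2).comp (map h1)

attribute [instance] PersMod.acg PersMod.mod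

/-- `V` and `W` are `ε`-interleaved: there is a quadruple of families of maps
`φ_a, φ_b̄, ψ_a, ψ_b̄` shifted by `ε` satisfying the naturality conditions (i),
(i') and the triangle conditions (ii), (ii') of Definition 5.5. -/
def IsInterleaved (k : Type) [Field k] (V W : PersMod k) (ε : ℝ) (hε : 0 ≤ ε) :
    Prop :=
  ∃ (φr : ∀ a : ℝ, V.V (.real a) →ₗ[k] W.V (.real (a + ε)))
    (φc : ∀ b : ℝ, V.V (.coreal b) →ₗ[k] W.V (.coreal (b - ε)))
    (ψr : ∀ a : ℝ, W.V (.real a) →ₗ[k] V.V (.real (a + ε)))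
    (ψc : ∀ b : ℝ, W.V (.coreal b) →ₗ[k] V.V (.coreal (b - ε))),
    -- (i) naturality for φ
    (∀ (a a' : ℝ) (h : a ≤ a'),
      (W.map (show EPt.real (a + ε) ≤ EPt.real (a' + ε) from by
        change a + ε ≤ a' + ε; linarith)).comp (φr a)
        = (φr a').comp (V.map (show EPt.real a ≤ EPt.real a' from h))) ∧
    (∀ a b : ℝ,
      (W.map (show EPt.real (a + ε) ≤ EPt.coreal (b - ε) from trivial)).comp (φr a)
        = (φc b).comp (V.map (show EPt.real a ≤ EPt.coreal b from trivial))) ∧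
    (∀ (b b' : ℝ) (h : b' ≤ b),
      (W.map (show EPt.coreal (b - ε) ≤ EPt.coreal (b' - ε) from
        sub_le_sub_right h ε)).comp (φc b)
        = (φc b').comp (V.map (show EPt.coreal b ≤ EPt.coreal b' from h))) ∧
    -- (i') naturality for ψ
    (∀ (a a' : ℝ) (h : a ≤ a'),
      (V.map (show EPt.real (a + ε) ≤ EPt.real (a' + ε) from by
        change a + ε ≤ a' + ε; linarith)).comp (ψr a)
        = (ψr a').comp (W.map (show EPt.real a ≤ EPt.real a' from h))) ∧
    (∀ a b : ℝ,
      (V.map (show EPt.real (a + ε) ≤ EPt.coreal (b - ε) from trivial)).comp (ψr a)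
        = (ψc b).comp (W.map (show EPt.real a ≤ EPt.coreal b from trivial))) ∧
    (∀ (b b' : ℝ) (h : b' ≤ b),
      (V.map (show EPt.coreal (b - ε) ≤ EPt.coreal (b' - ε) from
        sub_le_sub_right h ε)).comp (ψc b)
        = (ψc b').comp (W.map (show EPt.coreal b ≤ EPt.coreal b' from h))) ∧
    -- (ii) triangle conditions
    (∀ a : ℝ, (ψr (a + ε)).comp (φr a)
        = V.map (show EPt.real a ≤ EPt.real (a + ε + ε) from by
            change a ≤ a + ε + ε; linarith)) ∧
    (∀ b : ℝ, (ψc (b - ε)).comp (φc b)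
        = V.map (show EPt.coreal b ≤ EPt.coreal (b - ε - ε) from by
            change b - ε - ε ≤ b; linarith)) ∧
    -- (ii')
    (∀ a : ℝ, (φr (a + ε)).comp (ψr a)
        = W.map (show EPt.real a ≤ EPt.real (a + ε + ε) from by
            change a ≤ a + ε + ε; linarith)) ∧
    (∀ b : ℝ, (φc (b - ε)).comp (ψc b)
        = W.map (show EPt.coreal b ≤ EPt.coreal (b - ε - ε) from by
            change b - ε - ε ≤ b; linarith))

/-- The translation `Ω_δ` on `ℝ ∪ ℝᵒ ⊆ E` (fixing `∞`). -/
def shift (δ : ℝ) : EPt → EPt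
  | .real a => .real (a + δ)
  | .infty => .infty
  | .coreal b => .coreal (b - δ)

/-- The partial order on `E × {0, ε}` (the second coordinate `false ↔ 0`,
`true ↔ ε`): `(x,a) ≤ (y,b)` iff `Ω_{|a-b|}(x) ≤ y` with `x, y ≠ ∞`, or
`x ∈ ℝ` and `y = ∞`, or `x = ∞` and `y ∈ ℝᵒ`. -/
def le2 (ε : ℝ) : EPt × Bool → EPt × Bool → Prop := fun p q =>
  (p.1 ≠ EPt.infty ∧ q.1 ≠ EPt.infty ∧
    shift (if p.2 = q.2 then 0 else ε) p.1 ≤ q.1) ∨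
  ((∃ a : ℝ, p.1 = EPt.real a) ∧ q.1 = EPt.infty) ∨
  (p.1 = EPt.infty ∧ ∃ b : ℝ, q.1 = EPt.coreal b)

/-- The space family on `E × {0, ε}` given by `V` on level `0 = false` and `W`
on level `ε = true`. -/
def sp (k : Type) [Field k] (V W : PersMod k) : EPt × Bool → Type :=
  fun p => match p.2 with
    | false => V.V p.1
    | true => W.V p.1

instance spAcg (k : Type) [Field k] (V W : PersMod k) :
    ∀ p, AddCommGroup (sp k V W p)
  | (x, false) => V.acg x
  | (x, true) => W.acg x

instance spMod (k : Type) [Field k] (V W : PersMod k) :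
    ∀ p, Module k (sp k V W p)
  | (x, false) => V.mod x
  | (x, true) => W.mod x


section Aux

open EPt

@[simp] lemma EPt.real_le_real {a b : ℝ} : (EPt.real a ≤ EPt.real b) ↔ a ≤ b := Iff.rfl
@[simp] lemma EPt.coreal_le_coreal {a b : ℝ} : (EPt.coreal a ≤ EPt.coreal b) ↔ b ≤ a := Iff.rfl
@[simp] lemma EPt.real_le_coreal {a b : ℝ} : EPt.real a ≤ EPt.coreal b := trivial
@[simp] lemma EPt.real_le_infty {a : ℝ} : EPt.real a ≤ EPt.infty := trivial
@[simp] lemma EPt.infty_le_coreal {b : ℝ} : EPt.infty ≤ EPt.coreal b := trivial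
@[simp] lemma EPt.infty_le_infty : (EPt.infty : EPt) ≤ EPt.infty := trivial
@[simp] lemma EPt.coreal_le_real_iff {a b : ℝ} : (EPt.coreal a ≤ EPt.real b) ↔ False := Iff.rfl
@[simp] lemma EPt.coreal_le_infty_iff {a : ℝ} : (EPt.coreal a ≤ EPt.infty) ↔ False := Iff.rfl
@[simp] lemma EPt.infty_le_real_iff {b : ℝ} : (EPt.infty ≤ EPt.real b) ↔ False := Iff.rfl

@[simp] lemma shift_real (δ a : ℝ) : shift δ (EPt.real a) = EPt.real (a + δ) := rfl
@[simp] lemma shift_coreal (δ b : ℝ) : shift δ (EPt.coreal b) = EPt.coreal (b - δ) := rfl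
@[simp] lemma shift_infty (δ : ℝ) : shift δ EPt.infty = EPt.infty := rfl

variable {k : Type} [Field k]

lemma PersMod.comp_map (A : PersMod k) {x y z : EPt} (h1 : x ≤ y) (h2 : y ≤ z) (h : x ≤ z) :
    (A.map h2).comp (A.map h1) = A.map h := (A.map_comp h1 h2).symm

/-- The cross relation. -/
def R (ε : ℝ) (x y : EPt) : Prop :=
  (x ≠ EPt.infty ∧ y ≠ EPt.infty ∧ shift ε x ≤ y) ∨
  ((∃ a : ℝ, x = EPt.real a) ∧ y = EPt.infty) ∨
  (x = EPt.infty ∧ ∃ b : ℝ, y = EPt.coreal b)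

lemma R_real_le {ε a : ℝ} {y : EPt} (h : R ε (EPt.real a) y) : EPt.real (a + ε) ≤ y := by
  cases y with
  | real b => rcases h with ⟨-, -, h⟩ | ⟨-, h⟩ | ⟨h, -⟩ <;> simp_all
  | infty => simp
  | coreal b => simp

lemma R_cc {ε a b : ℝ} (h : R ε (EPt.coreal a) (EPt.coreal b)) :
    EPt.coreal (a - ε) ≤ EPt.coreal b := by
  rcases h with ⟨-, -, h⟩ | ⟨⟨c, hc⟩, h⟩ | ⟨h, -⟩ <;> simp_all

lemma R_coreal {ε a : ℝ} {y : EPt} (h : R ε (EPt.coreal a) y) :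
    ∃ b : ℝ, y = EPt.coreal b := by
  rcases h with ⟨-, hy, h⟩ | ⟨⟨c, hc⟩, h⟩ | ⟨h, -⟩
  · cases y with
    | real b => simp_all
    | infty => simp_all
    | coreal b => exact ⟨b, rfl⟩
  · simp_all
  · simp_all

lemma R_infty {ε : ℝ} {y : EPt} (h : R ε EPt.infty y) : ∃ b : ℝ, y = EPt.coreal b := by
  rcases h with ⟨hx, -, -⟩ | ⟨⟨c, hc⟩, -⟩ | ⟨-, hb⟩ <;> simp_all

lemma R_cr {ε a b : ℝ} (h : R ε (EPt.coreal a) (EPt.real b)) : False := by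
  obtain ⟨c, hc⟩ := R_coreal h; simp_all

lemma R_ci {ε a : ℝ} (h : R ε (EPt.coreal a) EPt.infty) : False := by
  obtain ⟨c, hc⟩ := R_coreal h; simp_all

lemma R_ir {ε b : ℝ} (h : R ε EPt.infty (EPt.real b)) : False := by
  obtain ⟨c, hc⟩ := R_infty h; simp_all

lemma R_ii {ε : ℝ} (h : R ε EPt.infty EPt.infty) : False := by
  obtain ⟨c, hc⟩ := R_infty h; simp_all

lemma R_zero_le {x y : EPt} (h : R 0 x y) : x ≤ y := by
  cases x with
  | real a => have := R_real_le h; cases y <;> simp_all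
  | infty =>
    cases y with
    | real b => exact (R_ir h).elim
    | infty => exact (R_ii h).elim
    | coreal b => simp
  | coreal a =>
    obtain ⟨b, rfl⟩ := R_coreal h
    have := R_cc h; simp_all

lemma R_cc_mk {ε a b : ℝ} (h : b ≤ a - ε) : R ε (EPt.coreal a) (EPt.coreal b) :=
  Or.inl ⟨by simp, by simp, by simp [h]⟩

lemma R_mono_left {ε : ℝ} {y' y z : EPt} (hy : y' ≤ y) (h : R ε y z) : R ε y' z := by
  cases y' with
  | real a =>
    cases z with
    | real c =>
      cases y with
      | real b =>
        have hb := R_real_le h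
        exact Or.inl ⟨by simp, by simp, by simp_all; linarith⟩
      | infty => exact (R_ir h).elim
      | coreal b => exact (R_cr h).elim
    | infty => exact Or.inr (Or.inl ⟨⟨a, rfl⟩, rfl⟩)
    | coreal c => exact Or.inl ⟨by simp, by simp, by simp⟩
  | infty =>
    cases y with
    | real b => simp_all
    | infty => obtain ⟨c, rfl⟩ := R_infty h; exact Or.inr (Or.inr ⟨rfl, c, rfl⟩)
    | coreal b =>
      obtain ⟨c, rfl⟩ := R_coreal h
      exact Or.inr (Or.inr ⟨rfl, c, rfl⟩)
  | coreal a =>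
    cases y with
    | real b => simp_all
    | infty => simp_all
    | coreal b =>
      obtain ⟨c, rfl⟩ := R_coreal h
      have h1 := R_cc h
      exact R_cc_mk (by simp_all; linarith)

/-- The cross map built from an interleaving half. -/
def cross (A B : PersMod k) (ε : ℝ)
    (fr : ∀ a : ℝ, A.V (EPt.real a) →ₗ[k] B.V (EPt.real (a + ε)))
    (fc : ∀ b : ℝ, A.V (EPt.coreal b) →ₗ[k] B.V (EPt.coreal (b - ε))) :
    ∀ x y : EPt, R ε x y → (A.V x →ₗ[k] B.V y)
  | .real a, y, h => (B.map (R_real_le h)).comp (fr a)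
  | .coreal a, .coreal b, h => (B.map (R_cc h)).comp (fc a)
  | .infty, .coreal b, h =>
      ((B.map (show EPt.coreal (b + ε - ε) ≤ EPt.coreal b by simp)).comp
        (fc (b + ε))).comp (A.map (show EPt.infty ≤ EPt.coreal (b + ε) by simp))
  | .coreal _, .real _, h => (R_cr h).elim
  | .coreal _, .infty, h => (R_ci h).elim
  | .infty, .real _, h => (R_ir h).elim
  | .infty, .infty, h => (R_ii h).elim

section CrossLemmas

variable {A B : PersMod k} {ε : ℝ}
  {fr : ∀ a : ℝ, A.V (EPt.real a) →ₗ[k] B.V (EPt.real (a + ε))}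
  {fc : ∀ b : ℝ, A.V (EPt.coreal b) →ₗ[k] B.V (EPt.coreal (b - ε))}

lemma cross_real {a : ℝ} {y : EPt} (h : R ε (EPt.real a) y) (h' : EPt.real (a + ε) ≤ y) :
    cross A B ε fr fc (EPt.real a) y h = (B.map h').comp (fr a) := by
  cases y <;> rfl

lemma cross_cc {a b : ℝ} (h : R ε (EPt.coreal a) (EPt.coreal b))
    (h' : EPt.coreal (a - ε) ≤ EPt.coreal b) :
    cross A B ε fr fc (EPt.coreal a) (EPt.coreal b) h = (B.map h').comp (fc a) := rfl

lemma cross_ic {b : ℝ} (h : R ε EPt.infty (EPt.coreal b))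
    (h' : EPt.coreal (b + ε - ε) ≤ EPt.coreal b) (h'' : EPt.infty ≤ EPt.coreal (b + ε)) :
    cross A B ε fr fc EPt.infty (EPt.coreal b) h
      = ((B.map h').comp (fc (b + ε))).comp (A.map h'') := rfl

variable
  (hn1 : ∀ (a a' : ℝ) (h : a ≤ a') (h1 : EPt.real (a + ε) ≤ EPt.real (a' + ε))
    (h2 : EPt.real a ≤ EPt.real a'),
    (B.map h1).comp (fr a) = (fr a').comp (A.map h2))
  (hn2 : ∀ (a b : ℝ) (h1 : EPt.real (a + ε) ≤ EPt.coreal (b - ε))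
    (h2 : EPt.real a ≤ EPt.coreal b),
    (B.map h1).comp (fr a) = (fc b).comp (A.map h2))
  (hn3 : ∀ (b b' : ℝ) (h : b' ≤ b) (h1 : EPt.coreal (b - ε) ≤ EPt.coreal (b' - ε))
    (h2 : EPt.coreal b ≤ EPt.coreal b'),
    (B.map h1).comp (fc b) = (fc b').comp (A.map h2))

include hn1 hn2 hn3 in
lemma cross_pre : ∀ {x x' y : EPt} (hx : x ≤ x') (h' : R ε x' y) (h : R ε x y),
    (cross A B ε fr fc x' y h').comp (A.map hx) = cross A B ε fr fc x y h := by
  intro x x' y hx h' h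
  cases x with
  | real a =>
    cases x' with
    | real a' =>
      rw [cross_real h' (R_real_le h'), cross_real h (R_real_le h), LinearMap.comp_assoc,
        ← hn1 a a' hx (by simpa using add_le_add_right (show a ≤ a' from hx) ε) hx,
        ← LinearMap.comp_assoc, B.comp_map _ _ (R_real_le h)]
    | infty =>
      obtain ⟨c, rfl⟩ := R_infty h'
      rw [cross_ic h' (by simp) (by simp), cross_real h (R_real_le h), LinearMap.comp_assoc,
        A.comp_map hx (by simp) (by simp), LinearMap.comp_assoc,
        ← hn2 a (c + ε) (by simp) (by simp), ← LinearMap.comp_assoc,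
        B.comp_map _ _ (R_real_le h)]
    | coreal a' =>
      obtain ⟨c, rfl⟩ := R_coreal h'
      rw [cross_cc h' (R_cc h'), cross_real h (R_real_le h), LinearMap.comp_assoc,
        ← hn2 a a' (by simp) (by simp), ← LinearMap.comp_assoc,
        B.comp_map _ _ (R_real_le h)]
  | infty =>
    cases x' with
    | real a' => exact (show False from hx).elim
    | infty =>
      obtain ⟨c, rfl⟩ := R_infty h'
      rw [A.map_id, LinearMap.comp_id]
    | coreal a' =>
      obtain ⟨c, rfl⟩ := R_coreal h'
      have hca : c + ε ≤ a' := by have := R_cc h'; simp_all; linarith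
      have key : ((B.map (show EPt.coreal (c + ε - ε) ≤ EPt.coreal c by simp)).comp
          (fc (c + ε))).comp (A.map (show EPt.coreal a' ≤ EPt.coreal (c + ε) by simp [hca]))
          = (B.map (R_cc h')).comp (fc a') := by
        rw [LinearMap.comp_assoc,
          show (fc (c + ε)).comp (A.map (show EPt.coreal a' ≤ EPt.coreal (c + ε) by simp [hca]))
            = (B.map (show EPt.coreal (a' - ε) ≤ EPt.coreal (c + ε - ε) by simp; linarith)).comp
              (fc a') from (hn3 a' (c + ε) hca _ _).symm,
          ← LinearMap.comp_assoc, B.comp_map _ _ (R_cc h')]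
      rw [cross_cc h' (R_cc h'), cross_ic h (by simp) (by simp),
        show (A.map (show EPt.infty ≤ EPt.coreal (c + ε) by simp) : _)
          = (A.map (show EPt.coreal a' ≤ EPt.coreal (c + ε) by simp [hca])).comp (A.map hx)
          from (A.comp_map _ _ _).symm,
        ← LinearMap.comp_assoc, key]
  | coreal a =>
    cases x' with
    | real a' => exact (show False from hx).elim
    | infty => exact (show False from hx).elim
    | coreal a' =>
      obtain ⟨c, rfl⟩ := R_coreal h'
      have haa : a' ≤ a := hx
      rw [cross_cc h' (R_cc h'), cross_cc h (R_cc h), LinearMap.comp_assoc,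
        ← hn3 a a' haa (by simpa using sub_le_sub_right haa ε) hx,
        ← LinearMap.comp_assoc, B.comp_map _ _ (R_cc h)]

include hn3 in
lemma cross_post : ∀ {x y y' : EPt} (hy : y ≤ y') (h : R ε x y) (h' : R ε x y'),
    (B.map hy).comp (cross A B ε fr fc x y h) = cross A B ε fr fc x y' h' := by
  intro x y y' hy h h'
  cases x with
  | real a =>
    rw [cross_real h (R_real_le h), cross_real h' (R_real_le h'),
      ← LinearMap.comp_assoc, B.comp_map _ _ (R_real_le h')]
  | infty =>
    obtain ⟨b, rfl⟩ := R_infty h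
    obtain ⟨b', rfl⟩ := R_infty h'
    have hbb : b' ≤ b := hy
    rw [cross_ic h (by simp) (by simp), cross_ic h' (by simp) (by simp),
      show (A.map (show EPt.infty ≤ EPt.coreal (b' + ε) by simp) : _)
        = (A.map (show EPt.coreal (b + ε) ≤ EPt.coreal (b' + ε) by simp [hbb])).comp
          (A.map (show EPt.infty ≤ EPt.coreal (b + ε) by simp))
        from (A.comp_map _ _ _).symm,
      ]
    simp only [← LinearMap.comp_assoc]
    rw [B.comp_map _ _ (show EPt.coreal (b + ε - ε) ≤ EPt.coreal b' by simp [hbb]),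
      LinearMap.comp_assoc (A.map (show EPt.coreal (b + ε) ≤ EPt.coreal (b' + ε)
        by simp [hbb])) (fc (b' + ε)) (B.map _),
      show (fc (b' + ε)).comp (A.map (show EPt.coreal (b + ε) ≤ EPt.coreal (b' + ε)
          by simp [hbb]))
        = (B.map (show EPt.coreal (b + ε - ε) ≤ EPt.coreal (b' + ε - ε) by simp [hbb])).comp
          (fc (b + ε)) from (hn3 (b + ε) (b' + ε) (by linarith) _ _).symm,
      ← LinearMap.comp_assoc,
      B.comp_map _ _ (show EPt.coreal (b + ε - ε) ≤ EPt.coreal b' by simp [hbb])]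
  | coreal a =>
    obtain ⟨b, rfl⟩ := R_coreal h
    obtain ⟨b', rfl⟩ := R_coreal h'
    rw [cross_cc h (R_cc h), cross_cc h' (R_cc h'),
      ← LinearMap.comp_assoc, B.comp_map _ _ (R_cc h')]

end CrossLemmas

section TriLemma

variable {A B : PersMod k} {ε : ℝ}
  {fr : ∀ a : ℝ, A.V (EPt.real a) →ₗ[k] B.V (EPt.real (a + ε))}
  {fc : ∀ b : ℝ, A.V (EPt.coreal b) →ₗ[k] B.V (EPt.coreal (b - ε))}
  {gr : ∀ a : ℝ, B.V (EPt.real a) →ₗ[k] A.V (EPt.real (a + ε))}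
  {gc : ∀ b : ℝ, B.V (EPt.coreal b) →ₗ[k] A.V (EPt.coreal (b - ε))}

variable
  (gn1 : ∀ (a a' : ℝ) (h : a ≤ a') (h1 : EPt.real (a + ε) ≤ EPt.real (a' + ε))
    (h2 : EPt.real a ≤ EPt.real a'),
    (A.map h1).comp (gr a) = (gr a').comp (B.map h2))
  (gn2 : ∀ (a b : ℝ) (h1 : EPt.real (a + ε) ≤ EPt.coreal (b - ε))
    (h2 : EPt.real a ≤ EPt.coreal b),
    (A.map h1).comp (gr a) = (gc b).comp (B.map h2))
  (gn3 : ∀ (b b' : ℝ) (h : b' ≤ b) (h1 : EPt.coreal (b - ε) ≤ EPt.coreal (b' - ε))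
    (h2 : EPt.coreal b ≤ EPt.coreal b'),
    (A.map h1).comp (gc b) = (gc b').comp (B.map h2))
  (t1 : ∀ (a : ℝ) (h : EPt.real a ≤ EPt.real (a + ε + ε)),
    (gr (a + ε)).comp (fr a) = A.map h)
  (t2 : ∀ (b : ℝ) (h : EPt.coreal b ≤ EPt.coreal (b - ε - ε)),
    (gc (b - ε)).comp (fc b) = A.map h)

include gn1 gn2 gn3 t1 t2 in
lemma cross_tri (hε : 0 ≤ ε) :
    ∀ {x y z : EPt} (h1 : R ε x y) (h2 : R ε y z) (hxz : x ≤ z),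
    (cross B A ε gr gc y z h2).comp (cross A B ε fr fc x y h1) = A.map hxz := by
  intro x y z h1 h2 hxz
  cases x with
  | real a =>
    have h2' : R ε (EPt.real (a + ε)) z := R_mono_left (R_real_le h1) h2
    rw [cross_real h1 (R_real_le h1), ← LinearMap.comp_assoc,
      cross_pre gn1 gn2 gn3 (R_real_le h1) h2 h2',
      cross_real h2' (R_real_le h2'), LinearMap.comp_assoc,
      t1 a (by simp; linarith), A.comp_map _ _ hxz]
  | coreal a =>
    obtain ⟨b, rfl⟩ := R_coreal h1
    obtain ⟨c, rfl⟩ := R_coreal h2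
    have h2' : R ε (EPt.coreal (a - ε)) (EPt.coreal c) := R_mono_left (R_cc h1) h2
    rw [cross_cc h1 (R_cc h1), ← LinearMap.comp_assoc,
      cross_pre gn1 gn2 gn3 (R_cc h1) h2 h2',
      cross_cc h2' (R_cc h2'), LinearMap.comp_assoc,
      t2 a (by simp; linarith), A.comp_map _ _ hxz]
  | infty =>
    obtain ⟨b, rfl⟩ := R_infty h1
    obtain ⟨c, rfl⟩ := R_coreal h2
    have h2' : R ε (EPt.coreal (b + ε - ε)) (EPt.coreal c) :=
      R_mono_left (show EPt.coreal (b + ε - ε) ≤ EPt.coreal b by simp) h2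
    rw [cross_ic h1 (by simp) (by simp)]
    simp only [← LinearMap.comp_assoc]
    rw [cross_pre gn1 gn2 gn3 (show EPt.coreal (b + ε - ε) ≤ EPt.coreal b by simp) h2 h2',
      cross_cc h2' (R_cc h2'),
      LinearMap.comp_assoc (fc (b + ε)) (gc (b + ε - ε)) (A.map (R_cc h2')),
      t2 (b + ε) (by simp; linarith),
      A.comp_map _ _ (show EPt.coreal (b + ε) ≤ EPt.coreal c by
        have := R_cc h2; simp_all; linarith),
      A.comp_map _ _ hxz]
end TriLemma
end Aux


section MkLemmas
open EPt

lemma R_rr_mk {ε a b : ℝ} (h : a + ε ≤ b) : R ε (EPt.real a) (EPt.real b) :=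
  Or.inl ⟨by simp, by simp, by simp [h]⟩

lemma R_rc_mk {ε a b : ℝ} : R ε (EPt.real a) (EPt.coreal b) :=
  Or.inl ⟨by simp, by simp, by simp⟩

lemma le2_mk {ε : ℝ} {x y : EPt} {b b' : Bool}
    (h : R (if b = b' then 0 else ε) x y) : le2 ε (x, b) (y, b') := h

variable {k : Type} [Field k]

/-- The extension functor built from an interleaving. -/
def bigL (V W : PersMod k) (ε : ℝ)
    (φr : ∀ a : ℝ, V.V (EPt.real a) →ₗ[k] W.V (EPt.real (a + ε)))
    (φc : ∀ b : ℝ, V.V (EPt.coreal b) →ₗ[k] W.V (EPt.coreal (b - ε)))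
    (ψr : ∀ a : ℝ, W.V (EPt.real a) →ₗ[k] V.V (EPt.real (a + ε)))
    (ψc : ∀ b : ℝ, W.V (EPt.coreal b) →ₗ[k] V.V (EPt.coreal (b - ε))) :
    ∀ p q : EPt × Bool, le2 ε p q → (sp k V W p →ₗ[k] sp k V W q)
  | (x, false), (y, false), h => V.map (R_zero_le (x := x) (y := y) h)
  | (x, false), (y, true), h => cross V W ε φr φc x y h
  | (x, true), (y, false), h => cross W V ε ψr ψc x y h
  | (x, true), (y, true), h => W.map (R_zero_le (x := x) (y := y) h)

end MkLemmas

/-- **Theorem 5.11 of the paper.**  Two extended persistence modules `V`, `W`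
are `ε`-interleaved if and only if the functor extension problem over the poset
`E × {0, ε}` has a solution, i.e. there is a functor `L` on `E × {0, ε}`
restricting to `V` on `E × {0}` and to `W` on `E × {ε}`. -/
theorem interleaved_iff_functor_extension
    (k : Type) [Field k] (V W : PersMod k) (ε : ℝ) (hε : 0 < ε) :
    IsInterleaved k V W ε hε.le ↔
    ∃ L : ∀ p q : EPt × Bool, le2 ε p q → (sp k V W p →ₗ[k] sp k V W q),
      (∀ (p : EPt × Bool) (h : le2 ε p p), L p p h = LinearMap.id) ∧
      (∀ (p q r : EPt × Bool) (h1 : le2 ε p q) (h2 : le2 ε q r)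
          (h : le2 ε p r), L p r h = (L q r h2).comp (L p q h1)) ∧
      (∀ (x y : EPt) (h : x ≤ y) (h' : le2 ε (x, false) (y, false)),
        L (x, false) (y, false) h' = V.map h) ∧
      (∀ (x y : EPt) (h : x ≤ y) (h' : le2 ε (x, true) (y, true)),
        L (x, true) (y, true) h' = W.map h) := by
  constructor
  · rintro ⟨φr, φc, ψr, ψc, n1, n2, n3, m1, m2, m3, t1, t2, s1, s2⟩
    refine ⟨bigL V W ε φr φc ψr ψc, ?_, ?_, ?_, ?_⟩
    · rintro ⟨x, b⟩ h
      cases b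
      · exact V.map_id x _
      · exact W.map_id x _
    · rintro ⟨x, bx⟩ ⟨y, by'⟩ ⟨z, bz⟩ h1 h2 h
      cases bx <;> cases by' <;> cases bz
      · exact (V.comp_map (R_zero_le h1) (R_zero_le h2) (R_zero_le h)).symm
      · exact (cross_pre (fun a a' ha hh1 hh2 => n1 a a' ha) (fun a b hh1 hh2 => n2 a b)
          (fun b b' hb hh1 hh2 => n3 b b' hb) (R_zero_le h1) h2 h).symm
      · exact (cross_tri (fun a a' ha hh1 hh2 => m1 a a' ha) (fun a b hh1 hh2 => m2 a b)
          (fun b b' hb hh1 hh2 => m3 b b' hb) (fun a hh => t1 a) (fun b hh => t2 b)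
          hε.le h1 h2 (R_zero_le h)).symm
      · exact (cross_post (fun b b' hb hh1 hh2 => n3 b b' hb) (R_zero_le h2) h1 h).symm
      · exact (cross_post (fun b b' hb hh1 hh2 => m3 b b' hb) (R_zero_le h2) h1 h).symm
      · exact (cross_tri (fun a a' ha hh1 hh2 => n1 a a' ha) (fun a b hh1 hh2 => n2 a b)
          (fun b b' hb hh1 hh2 => n3 b b' hb) (fun a hh => s1 a) (fun b hh => s2 b)
          hε.le h1 h2 (R_zero_le h)).symm
      · exact (cross_pre (fun a a' ha hh1 hh2 => m1 a a' ha) (fun a b hh1 hh2 => m2 a b)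
          (fun b b' hb hh1 hh2 => m3 b b' hb) (R_zero_le h1) h2 h).symm
      · exact (W.comp_map (R_zero_le h1) (R_zero_le h2) (R_zero_le h)).symm
    · intro x y h h'
      rfl
    · intro x y h h'
      rfl
  · rintro ⟨L, hid, hcomp, hV, hW⟩
    refine ⟨fun a => L (.real a, false) (.real (a + ε), true) (le2_mk (R_rr_mk (by norm_num))),
      fun b => L (.coreal b, false) (.coreal (b - ε), true) (le2_mk (R_cc_mk (by norm_num))),
      fun a => L (.real a, true) (.real (a + ε), false) (le2_mk (R_rr_mk (by norm_num))),
      fun b => L (.coreal b, true) (.coreal (b - ε), false) (le2_mk (R_cc_mk (by norm_num))),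
      ?_, ?_, ?_, ?_, ?_, ?_, ?_, ?_, ?_, ?_⟩
    · intro a a' h
      have q2 : le2 ε (EPt.real (a + ε), true) (EPt.real (a' + ε), true) :=
        le2_mk (R_rr_mk (by simp; linarith))
      have q3 : le2 ε (EPt.real a, false) (EPt.real (a' + ε), true) :=
        le2_mk (R_rr_mk (by simp; linarith))
      have q4 : le2 ε (EPt.real a, false) (EPt.real a', false) :=
        le2_mk (R_rr_mk (by simp; linarith))
      have e1 := hcomp (EPt.real a, false) (EPt.real (a + ε), true) (EPt.real (a' + ε), true) (le2_mk (R_rr_mk (by norm_num))) q2 q3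
      have e2 := hcomp (EPt.real a, false) (EPt.real a', false) (EPt.real (a' + ε), true) q4 (le2_mk (R_rr_mk (by norm_num))) q3
      rw [hW _ _ (R_zero_le q2) q2] at e1
      rw [hV _ _ (R_zero_le q4) q4] at e2
      exact e1.symm.trans e2
    · intro a b
      have q2 : le2 ε (EPt.real (a + ε), true) (EPt.coreal (b - ε), true) := le2_mk R_rc_mk
      have q3 : le2 ε (EPt.real a, false) (EPt.coreal (b - ε), true) := le2_mk R_rc_mk
      have q4 : le2 ε (EPt.real a, false) (EPt.coreal b, false) := le2_mk R_rc_mk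
      have e1 := hcomp (EPt.real a, false) (EPt.real (a + ε), true) (EPt.coreal (b - ε), true) (le2_mk (R_rr_mk (by norm_num))) q2 q3
      have e2 := hcomp (EPt.real a, false) (EPt.coreal b, false) (EPt.coreal (b - ε), true) q4 (le2_mk (R_cc_mk (by norm_num))) q3
      rw [hW _ _ (R_zero_le q2) q2] at e1
      rw [hV _ _ (R_zero_le q4) q4] at e2
      exact e1.symm.trans e2
    · intro b b' h
      have q2 : le2 ε (EPt.coreal (b - ε), true) (EPt.coreal (b' - ε), true) :=
        le2_mk (R_cc_mk (by simp; linarith))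
      have q3 : le2 ε (EPt.coreal b, false) (EPt.coreal (b' - ε), true) :=
        le2_mk (R_cc_mk (by simp; linarith))
      have q4 : le2 ε (EPt.coreal b, false) (EPt.coreal b', false) :=
        le2_mk (R_cc_mk (by simp; linarith))
      have e1 := hcomp (EPt.coreal b, false) (EPt.coreal (b - ε), true) (EPt.coreal (b' - ε), true) (le2_mk (R_cc_mk (by norm_num))) q2 q3
      have e2 := hcomp (EPt.coreal b, false) (EPt.coreal b', false) (EPt.coreal (b' - ε), true) q4 (le2_mk (R_cc_mk (by norm_num))) q3
      rw [hW _ _ (R_zero_le q2) q2] at e1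
      rw [hV _ _ (R_zero_le q4) q4] at e2
      exact e1.symm.trans e2
    · intro a a' h
      have q2 : le2 ε (EPt.real (a + ε), false) (EPt.real (a' + ε), false) :=
        le2_mk (R_rr_mk (by simp; linarith))
      have q3 : le2 ε (EPt.real a, true) (EPt.real (a' + ε), false) :=
        le2_mk (R_rr_mk (by simp; linarith))
      have q4 : le2 ε (EPt.real a, true) (EPt.real a', true) :=
        le2_mk (R_rr_mk (by simp; linarith))
      have e1 := hcomp (EPt.real a, true) (EPt.real (a + ε), false) (EPt.real (a' + ε), false) (le2_mk (R_rr_mk (by norm_num))) q2 q3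
      have e2 := hcomp (EPt.real a, true) (EPt.real a', true) (EPt.real (a' + ε), false) q4 (le2_mk (R_rr_mk (by norm_num))) q3
      rw [hV _ _ (R_zero_le q2) q2] at e1
      rw [hW _ _ (R_zero_le q4) q4] at e2
      exact e1.symm.trans e2
    · intro a b
      have q2 : le2 ε (EPt.real (a + ε), false) (EPt.coreal (b - ε), false) := le2_mk R_rc_mk
      have q3 : le2 ε (EPt.real a, true) (EPt.coreal (b - ε), false) := le2_mk R_rc_mk
      have q4 : le2 ε (EPt.real a, true) (EPt.coreal b, true) := le2_mk R_rc_mk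
      have e1 := hcomp (EPt.real a, true) (EPt.real (a + ε), false) (EPt.coreal (b - ε), false) (le2_mk (R_rr_mk (by norm_num))) q2 q3
      have e2 := hcomp (EPt.real a, true) (EPt.coreal b, true) (EPt.coreal (b - ε), false) q4 (le2_mk (R_cc_mk (by norm_num))) q3
      rw [hV _ _ (R_zero_le q2) q2] at e1
      rw [hW _ _ (R_zero_le q4) q4] at e2
      exact e1.symm.trans e2
    · intro b b' h
      have q2 : le2 ε (EPt.coreal (b - ε), false) (EPt.coreal (b' - ε), false) :=
        le2_mk (R_cc_mk (by simp; linarith))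
      have q3 : le2 ε (EPt.coreal b, true) (EPt.coreal (b' - ε), false) :=
        le2_mk (R_cc_mk (by simp; linarith))
      have q4 : le2 ε (EPt.coreal b, true) (EPt.coreal b', true) :=
        le2_mk (R_cc_mk (by simp; linarith))
      have e1 := hcomp (EPt.coreal b, true) (EPt.coreal (b - ε), false) (EPt.coreal (b' - ε), false) (le2_mk (R_cc_mk (by norm_num))) q2 q3
      have e2 := hcomp (EPt.coreal b, true) (EPt.coreal b', true) (EPt.coreal (b' - ε), false) q4 (le2_mk (R_cc_mk (by norm_num))) q3
      rw [hV _ _ (R_zero_le q2) q2] at e1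
      rw [hW _ _ (R_zero_le q4) q4] at e2
      exact e1.symm.trans e2
    · intro a
      have q3 : le2 ε (EPt.real a, false) (EPt.real (a + ε + ε), false) :=
        le2_mk (R_rr_mk (by simp; linarith))
      exact (hcomp (EPt.real a, false) (EPt.real (a + ε), true) (EPt.real (a + ε + ε), false) (le2_mk (R_rr_mk (by norm_num))) (le2_mk (R_rr_mk (by norm_num))) q3).symm.trans (hV _ _ _ q3)
    · intro b
      have q3 : le2 ε (EPt.coreal b, false) (EPt.coreal (b - ε - ε), false) :=
        le2_mk (R_cc_mk (by simp; linarith))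
      exact (hcomp (EPt.coreal b, false) (EPt.coreal (b - ε), true) (EPt.coreal (b - ε - ε), false) (le2_mk (R_cc_mk (by norm_num))) (le2_mk (R_cc_mk (by norm_num))) q3).symm.trans (hV _ _ _ q3)
    · intro a
      have q3 : le2 ε (EPt.real a, true) (EPt.real (a + ε + ε), true) :=
        le2_mk (R_rr_mk (by simp; linarith))
      exact (hcomp (EPt.real a, true) (EPt.real (a + ε), false) (EPt.real (a + ε + ε), true) (le2_mk (R_rr_mk (by norm_num))) (le2_mk (R_rr_mk (by norm_num))) q3).symm.trans (hW _ _ _ q3)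
    · intro b
      have q3 : le2 ε (EPt.coreal b, true) (EPt.coreal (b - ε - ε), true) :=
        le2_mk (R_cc_mk (by simp; linarith))
      exact (hcomp (EPt.coreal b, true) (EPt.coreal (b - ε), false) (EPt.coreal (b - ε - ε), true) (le2_mk (R_cc_mk (by norm_num))) (le2_mk (R_cc_mk (by norm_num))) q3).symm.trans (hW _ _ _ q3)
end
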